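/- For the OneJumpZeroJump problem with parameters n and k (2 ≤ k ≤ n/4), a solution x ∈ {0,1}^n is Pareto optimal if and only if |x|₁ ∈ [k, n−k] ∪ {0, n}. -/

import Mathlib

def ones {n : ℕ} (x : Fin n → Bool) : ℕ := (Finset.univ.filter fun i => x i = true).card

def zeros {n : ℕ} (x : Fin n → Bool) : ℕ := (Finset.univ.filter fun i => x i = false).card

/-- First objective of OneJumpZeroJump_{n,k}. -/
def ojzjF1 (n k : ℕ) (x : Fin n → Bool) : ℤ :=
  if ones x ≤ n - k ∨ x = (fun _ => true) then (k : ℤ) + ones x else (n : ℤ) - ones x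

/-- Second objective of OneJumpZeroJump_{n,k}. -/
def ojzjF2 (n k : ℕ) (x : Fin n → Bool) : ℤ :=
  if zeros x ≤ n - k ∨ x = (fun _ => false) then (k : ℤ) + zeros x else (n : ℤ) - zeros x

def ojzjF (n k : ℕ) (x : Fin n → Bool) : ℤ × ℤ := (ojzjF1 n k x, ojzjF2 n k x)

def dominates {n : ℕ} (f : (Fin n → Bool) → ℤ × ℤ) (y x : Fin n → Bool) : Prop :=
  (f x).1 ≤ (f y).1 ∧ (f x).2 ≤ (f y).2 ∧ ((f x).1 < (f y).1 ∨ (f x).2 < (f y).2)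

def paretoOptimal {n : ℕ} (f : (Fin n → Bool) → ℤ × ℤ) (x : Fin n → Bool) : Prop :=
  ¬ ∃ y : Fin n → Bool, dominates f y x

/-!
Both objectives are the same function `jump n k` of a bit count, applied to `|x|₁` and to
`|x|₀ = n - |x|₁`. Off the gaps `0 < |x|₁ < k` and `n - k < |x|₁ < n` the two objectives add up
to `n + 2k`, which is the maximal value of their sum; as domination strictly increases the sum,
these points are Pareto optimal. A point in a gap is dominated by any point with `|x|₁ = k`,
whose objective vector is `(2k, n)`.
-/

theorem dominates.fst_add_snd_lt {n : ℕ} {f : (Fin n → Bool) → ℤ × ℤ} {x y : Fin n → Bool}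
    (h : dominates f y x) : (f x).1 + (f x).2 < (f y).1 + (f y).2 := by
  obtain ⟨h₁, h₂, h₁₂⟩ := h
  omega

section BitCounts

variable {n : ℕ} (x : Fin n → Bool)

theorem ones_add_zeros : ones x + zeros x = n := by
  simpa [ones, zeros] using
    Finset.card_filter_add_card_filter_not (s := Finset.univ) (fun i => x i = true)

theorem ones_le : ones x ≤ n :=
  Nat.le.intro (ones_add_zeros x)

theorem zeros_eq : zeros x = n - ones x := by
  have := ones_add_zeros x
  omega

theorem ones_eq_iff_eq_true : ones x = n ↔ x = fun _ => true := by
  simpa [ones, funext_iff] using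
    Finset.card_filter_eq_iff (s := Finset.univ) (p := fun i => x i = true)

theorem zeros_eq_iff_eq_false : zeros x = n ↔ x = fun _ => false := by
  simpa [zeros, funext_iff] using
    Finset.card_filter_eq_iff (s := Finset.univ) (p := fun i => x i = false)

theorem exists_ones_eq {m : ℕ} (hm : m ≤ n) : ∃ y : Fin n → Bool, ones y = m := by
  obtain ⟨s, -, hs⟩ := Finset.exists_subset_card_eq (s := (Finset.univ : Finset (Fin n)))
    (by simpa using hm)
  exact ⟨fun i => decide (i ∈ s), by simpa [ones] using hs⟩

end BitCounts

def jump (n k m : ℕ) : ℤ :=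
  if m ≤ n - k ∨ m = n then (k : ℤ) + m else (n : ℤ) - m

theorem ojzjF_eq (n k : ℕ) (x : Fin n → Bool) :
    ojzjF n k x = (jump n k (ones x), jump n k (n - ones x)) := by
  rw [← zeros_eq]
  simp only [ojzjF, ojzjF1, ojzjF2, jump, ones_eq_iff_eq_true, zeros_eq_iff_eq_false]

section JumpArithmetic

variable {n k m : ℕ}

theorem jump_add_jump_le (hk : 2 * k ≤ n) (hm : m ≤ n) :
    jump n k m + jump n k (n - m) ≤ n + 2 * k := by
  unfold jump
  split_ifs <;> omega

theorem jump_add_jump_eq (hm : m ≤ n) (hfront : (k ≤ m ∧ m ≤ n - k) ∨ m = 0 ∨ m = n) :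
    jump n k m + jump n k (n - m) = n + 2 * k := by
  unfold jump
  split_ifs <;> omega

theorem jump_lt_of_not_front (hk : 2 * k ≤ n) (hm : m ≤ n)
    (hgap : ¬((k ≤ m ∧ m ≤ n - k) ∨ m = 0 ∨ m = n)) :
    jump n k m < jump n k k ∧ jump n k (n - m) ≤ jump n k (n - k) := by
  unfold jump
  split_ifs <;> omega

end JumpArithmetic

theorem ojzj_pareto_set_general (n k : ℕ) (hk : 4 * k ≤ n) (x : Fin n → Bool) :
    paretoOptimal (ojzjF n k) x ↔
      (k ≤ ones x ∧ ones x ≤ n - k) ∨ ones x = 0 ∨ ones x = n := by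
  have hk₂ : 2 * k ≤ n := by omega
  constructor
  · intro hx
    by_contra hgap
    obtain ⟨y, hy⟩ := exists_ones_eq (show k ≤ n by omega)
    have hlt := jump_lt_of_not_front hk₂ (ones_le x) hgap
    refine hx ⟨y, ?_⟩
    simp only [dominates, ojzjF_eq, hy]
    omega
  · rintro hfront ⟨y, hy⟩
    have hsum_lt := hy.fst_add_snd_lt
    have hsum_y := jump_add_jump_le hk₂ (ones_le y)
    have hsum_x := jump_add_jump_eq (ones_le x) hfront
    simp only [ojzjF_eq] at hsum_lt
    omega

theorem ojzj_pareto_set (n k : ℕ) (h2 : 2 ≤ k) (hk : 4 * k ≤ n) (x : Fin n → Bool) :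
    paretoOptimal (ojzjF n k) x ↔
      (k ≤ ones x ∧ ones x ≤ n - k) ∨ ones x = 0 ∨ ones x = n :=
  ojzj_pareto_set_general n k hk x
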